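/- arXiv:1210.6591 — 2 statements merged into one kernel-verified Lean document; each statement's English description precedes it below -/
import Mathlib

section
/- The group G = ⟨a, b, t | t⁻¹at = b, t⁻¹bt = aba⁻¹⟩ contains a subgroup that is locally free but not free. -/
/-!
Conjugation by `t⁻¹` acts on `F = ⟨a, b⟩` as the endomorphism `ψ : a ↦ b, b ↦ aba⁻¹` of the free
group `F(a, b)`. This `ψ` is injective, so `G` maps to the ascending HNN extension of `F(a, b)`
along `ψ`, into which `F(a, b)` embeds; hence `F` is free on `a, b`.

The subgroup `H = ⋃ₙ tⁿ F t⁻ⁿ` is an increasing union of free groups (`a = t b t⁻¹` and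
`b = t (aba⁻¹) t⁻¹` give `F ≤ t F t⁻¹`), so by Nielsen–Schreier each finitely generated subgroup
of `H` is free. On abelianizations `ψ` becomes `a, b ↦ b`, so all the generators `tⁿ a t⁻ⁿ`,
`tⁿ b t⁻ⁿ` of `H` have the same image in `Hᵃᵇ`, which is therefore cyclic. A free group with
cyclic abelianization has at most one free generator and is commutative, but `a` and `b` do not
commute.
-/

/-- Generators: `0 = a`, `1 = b`, `2 = t`.  Relations of
`⟨a, b, t | t⁻¹at = b, t⁻¹bt = aba⁻¹⟩`. -/
def grels : Set (FreeGroup (Fin 3)) :=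
  {(FreeGroup.of 2)⁻¹ * FreeGroup.of 0 * FreeGroup.of 2 * (FreeGroup.of 1)⁻¹,
   (FreeGroup.of 2)⁻¹ * FreeGroup.of 1 * FreeGroup.of 2 *
     (FreeGroup.of 0 * FreeGroup.of 1 * (FreeGroup.of 0)⁻¹)⁻¹}

open Subgroup

theorem IsFreeGroup.of_injective {K L : Type*} [Group K] [Group L] [IsFreeGroup L] {f : K →* L}
    (hf : Function.Injective f) : IsFreeGroup K :=
  IsFreeGroup.ofMulEquiv (MonoidHom.ofInjective hf).symm

theorem isFreeGroup_of_fg_of_directed {G ι : Type*} [Group G] [Nonempty ι] {F : ι → Subgroup G}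
    (hF : Directed (· ≤ ·) F) [∀ i, IsFreeGroup (F i)] {K : Subgroup ↥(⨆ i, F i)}
    (hK : K.FG) : IsFreeGroup K := by
  classical
  obtain ⟨T, rfl⟩ := hK
  have hmem (x : ↥(⨆ i, F i)) : ∃ i, (x : G) ∈ F i := (mem_iSup_of_directed hF).mp x.2
  choose idx hidx using hmem
  obtain ⟨i, hi⟩ := hF.finset_le (T.image idx)
  have hle : closure (T : Set ↥(⨆ i, F i)) ≤ (F i).comap (⨆ i, F i).subtype :=
    closure_le _ |>.mpr fun x hx => hi _ (Finset.mem_image_of_mem idx hx) (hidx x)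
  let f := ((⨆ i, F i).subtype.comp (closure (T : Set ↥(⨆ i, F i))).subtype).codRestrict (F i)
    fun x => hle x.2
  exact IsFreeGroup.of_injective (f := f) fun x y h => Subtype.ext <| Subtype.ext
    (congrArg Subtype.val h :)

theorem FreeGroup.commute_of_subsingleton {α : Type*} [Subsingleton α] (x y : FreeGroup α) :
    Commute x y := by
  have hof (i : α) (w : FreeGroup α) : Commute (of i) w := by
    induction w using FreeGroup.induction_on with
    | C1 => exact Commute.one_right _
    | of j => rw [Subsingleton.elim i j]
    | inv_of j h => exact h.inv_right
    | mul u v hu hv => exact hu.mul_right hv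
  induction x using FreeGroup.induction_on with
  | C1 => exact Commute.one_left _
  | of i => exact hof i y
  | inv_of i h => exact h.inv_left
  | mul u v hu hv => exact hu.mul_left hv

theorem IsFreeGroup.subsingleton_generators_of_isCyclic_abelianization (G : Type*) [Group G]
    [IsFreeGroup G] [IsCyclic (Abelianization G)] : Subsingleton (IsFreeGroup.Generators G) := by
  classical
  refine ⟨fun s₁ s₂ => by_contra fun hne => ?_⟩
  let e : Multiplicative ℤ := .ofAdd 1
  let f : G →* Multiplicative ℤ × Multiplicative ℤ :=
    IsFreeGroup.lift fun s => (if s = s₁ then e else 1, if s = s₂ then e else 1)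
  have hf : Function.Surjective (Abelianization.lift f) := by
    rintro ⟨m, n⟩
    refine ⟨.of (IsFreeGroup.of s₁ ^ m.toAdd * IsFreeGroup.of s₂ ^ n.toAdd), ?_⟩
    simp [f, hne, Ne.symm hne, e, ← ofAdd_zsmul]
  exact not_isCyclic_prod_of_infinite_nontrivial _ _ (isCyclic_of_surjective _ hf)

theorem IsFreeGroup.commute_of_isCyclic_abelianization {G : Type*} [Group G] [IsFreeGroup G]
    [IsCyclic (Abelianization G)] (x y : G) : Commute x y := by
  have := subsingleton_generators_of_isCyclic_abelianization G
  simpa using (FreeGroup.commute_of_subsingleton (toFreeGroup G x) (toFreeGroup G y)).map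
    (toFreeGroup G).symm

abbrev AscendingHNN {K : Type*} [Group K] {ψ : K →* K} (hψ : Function.Injective ψ) :=
  HNNExtension K ⊤ ψ.range (topEquiv.trans (MonoidHom.ofInjective hψ))

theorem AscendingHNN.t_mul_of_mul_t_inv {K : Type*} [Group K] {ψ : K →* K}
    (hψ : Function.Injective ψ) (x : K) :
    (HNNExtension.t : AscendingHNN hψ) * .of x * HNNExtension.t⁻¹ = .of (ψ x) :=
  (HNNExtension.equiv_eq_conj (⟨x, trivial⟩ : (⊤ : Subgroup K))).symm

namespace grels

def psi : FreeGroup (Fin 2) →* FreeGroup (Fin 2) :=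
  FreeGroup.lift ![.of 1, .of 0 * .of 1 * (.of 0)⁻¹]

@[simp]
theorem psi_of_zero : psi (.of 0) = .of 1 := rfl

@[simp]
theorem psi_of_one : psi (.of 1) = .of 0 * .of 1 * (.of 0)⁻¹ := rfl

/-- In the holomorph `F ⋊ Aut F`, sending `a` to the swap `a ↔ b` and `b` to `a` turns `psi` into
the inclusion of `F`. -/
theorem psi_injective : Function.Injective psi := by
  let σ : MulAut (FreeGroup (Fin 2)) := FreeGroup.freeGroupCongr (Equiv.swap 0 1)
  let φ : FreeGroup (Fin 2) →* FreeGroup (Fin 2) ⋊[MonoidHom.id _] MulAut (FreeGroup (Fin 2)) :=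
    FreeGroup.lift ![.inr σ, .inl (.of 0)]
  have hφ : φ.comp psi = SemidirectProduct.inl := by
    refine FreeGroup.ext_hom _ _ fun i => ?_
    match i with
    | 0 => simp [φ]
    | 1 =>
      simp only [φ, MonoidHom.comp_apply, psi_of_one, map_mul, map_inv, FreeGroup.lift_apply_of]
      simp only [Matrix.cons_val_zero, Matrix.cons_val_one]
      rw [← map_inv, ← SemidirectProduct.inl_aut]
      rfl
  refine Function.Injective.of_comp (f := φ) ?_
  rw [← MonoidHom.coe_comp, hφ]
  exact SemidirectProduct.inl_injective

def a : PresentedGroup grels := .of 0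
def b : PresentedGroup grels := .of 1
def t : PresentedGroup grels := .of 2

theorem inv_t_mul_a_mul_t : t⁻¹ * a * t = b :=
  mul_inv_eq_one.mp (PresentedGroup.one_of_mem (Or.inl rfl))

theorem inv_t_mul_b_mul_t : t⁻¹ * b * t = a * b * a⁻¹ :=
  mul_inv_eq_one.mp (PresentedGroup.one_of_mem (Or.inr rfl))

noncomputable def toHNN : PresentedGroup grels →* AscendingHNN psi_injective :=
  PresentedGroup.toGroup (f := ![.of (.of 0), .of (.of 1), HNNExtension.t⁻¹]) <| by
    rintro r (rfl | rfl) <;>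
    · simp only [map_mul, map_inv, FreeGroup.lift_apply_of]
      simp
      rw [AscendingHNN.t_mul_of_mul_t_inv]
      simp [mul_assoc]

noncomputable def base : FreeGroup (Fin 2) →* PresentedGroup grels := FreeGroup.lift ![a, b]

theorem base_injective : Function.Injective base := by
  have h : toHNN.comp base = HNNExtension.of := by
    refine FreeGroup.ext_hom _ _ fun i => ?_
    fin_cases i <;> rfl
  refine Function.Injective.of_comp (f := toHNN) ?_
  rw [← MonoidHom.coe_comp, h]
  apply HNNExtension.of_injective

theorem base_comp_psi : base.comp psi = (MulAut.conj t⁻¹).toMonoidHom.comp base := by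
  refine FreeGroup.ext_hom _ _ fun i => ?_
  fin_cases i
  · simp [base, ← inv_t_mul_a_mul_t]
  · simp [base, ← inv_t_mul_b_mul_t]

noncomputable def layer (n : ℕ) : FreeGroup (Fin 2) →* PresentedGroup grels :=
  (MulAut.conj (t ^ n)).toMonoidHom.comp base

theorem layer_injective (n : ℕ) : Function.Injective (layer n) :=
  (MulAut.conj (t ^ n)).injective.comp base_injective

theorem layer_succ_comp_psi (n : ℕ) : (layer (n + 1)).comp psi = layer n := by
  refine MonoidHom.ext fun w => ?_
  have h := DFunLike.congr_fun base_comp_psi w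
  simp only [MonoidHom.comp_apply, MulEquiv.coe_toMonoidHom] at h
  simp only [layer, MonoidHom.comp_apply, MulEquiv.coe_toMonoidHom, h, ← MulAut.mul_apply,
    ← map_mul, pow_succ, mul_inv_cancel_right]

theorem layer_range_mono : Monotone fun n => (layer n).range :=
  monotone_nat_of_le_succ fun n => by
    rintro _ ⟨w, rfl⟩
    exact ⟨psi w, DFunLike.congr_fun (layer_succ_comp_psi n) w⟩

instance (n : ℕ) : IsFreeGroup (layer n).range :=
  IsFreeGroup.ofMulEquiv (MonoidHom.ofInjective (layer_injective n))

noncomputable abbrev layerUnion : Subgroup (PresentedGroup grels) := ⨆ n, (layer n).range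

noncomputable def layerIn (n : ℕ) : FreeGroup (Fin 2) →* layerUnion :=
  (layer n).codRestrict layerUnion fun w => le_iSup (fun n => (layer n).range) n ⟨w, rfl⟩

theorem layerIn_succ_comp_psi (n : ℕ) : (layerIn (n + 1)).comp psi = layerIn n :=
  MonoidHom.ext fun w => Subtype.ext (DFunLike.congr_fun (layer_succ_comp_psi n) w)

theorem layerIn_injective (n : ℕ) : Function.Injective (layerIn n) :=
  fun _ _ h => layer_injective n (congrArg Subtype.val h)

theorem exists_layerIn_eq (x : layerUnion) : ∃ n w, layerIn n w = x := by
  obtain ⟨n, w, hw⟩ := (mem_iSup_of_directed layer_range_mono.directed_le).mp x.2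
  exact ⟨n, w, Subtype.ext hw⟩

theorem abelianization_of_layerIn_of (n : ℕ) (i : Fin 2) :
    Abelianization.of (layerIn n (.of i)) = Abelianization.of (layerIn 0 (.of 1)) := by
  have hsucc (n : ℕ) : Abelianization.of (layerIn n (.of 1)) =
      Abelianization.of (layerIn (n + 1) (.of 1)) := by
    rw [← layerIn_succ_comp_psi n, MonoidHom.comp_apply, psi_of_one]
    simp
  have hb (n : ℕ) : Abelianization.of (layerIn n (.of 1)) =
      Abelianization.of (layerIn 0 (.of 1)) := by
    induction n with
    | zero => rfl
    | succ n ih => rw [← hsucc, ih]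
  match i with
  | 0 => rw [← layerIn_succ_comp_psi n, MonoidHom.comp_apply, psi_of_zero, hb]
  | 1 => exact hb n

instance : IsCyclic (Abelianization layerUnion) := by
  refine ⟨⟨Abelianization.of (layerIn 0 (.of 1)), fun x => ?_⟩⟩
  induction x using QuotientGroup.induction_on with | H y => ?_
  obtain ⟨n, w, rfl⟩ := exists_layerIn_eq y
  have hle : (Abelianization.of.comp (layerIn n)).range ≤
      zpowers (Abelianization.of (layerIn 0 (.of 1))) := by
    rw [MonoidHom.range_eq_map, ← FreeGroup.closure_range_of, MonoidHom.map_closure, closure_le]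
    rintro _ ⟨_, ⟨i, rfl⟩, rfl⟩
    exact abelianization_of_layerIn_of n i ▸ mem_zpowers _
  exact hle ⟨w, rfl⟩

theorem not_commute_layerIn : ¬ Commute (layerIn 0 (.of 0)) (layerIn 0 (.of 1)) := by
  intro h
  have h' : (FreeGroup.of 0 * FreeGroup.of 1 : FreeGroup (Fin 2)) = .of 1 * .of 0 :=
    layerIn_injective 0 (by simpa only [map_mul] using h.eq)
  exact absurd h' (by decide)

end grels

theorem stmt_10 :
    ∃ H : Subgroup (PresentedGroup grels),
      (∀ K : Subgroup H, K.FG → IsFreeGroup K) ∧ ¬ IsFreeGroup H :=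
  ⟨grels.layerUnion,
    fun _ hK => isFreeGroup_of_fg_of_directed grels.layer_range_mono.directed_le hK,
    fun _ => grels.not_commute_layerIn (IsFreeGroup.commute_of_isCyclic_abelianization _ _)⟩
end

section
/- In the group G = ⟨a, b, t | t⁻¹at = b, t⁻¹bt = aba⁻¹⟩, the subgroup ⟨a, b⟩ is properly contained in t⟨a,b⟩t⁻¹. -/
open Pointwise

theorem Subgroup.closure_pair_le_map_conj {H : Type*} [Group H] {a b t : H}
    (hab : t⁻¹ * a * t = b) (hba : t⁻¹ * b * t = a * b * a⁻¹) :
    closure {a, b} ≤ (closure {a, b}).map (MulAut.conj t).toMonoidHom := by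
  have ha : a ∈ closure {a, b} := subset_closure (Set.mem_insert _ _)
  have hb : b ∈ closure {a, b} := subset_closure (Set.mem_insert_of_mem _ rfl)
  rw [closure_le, Set.insert_subset_iff, Set.singleton_subset_iff]
  exact ⟨⟨b, hb, by simp [← hab, mul_assoc]⟩,
    ⟨a * b * a⁻¹, mul_mem (mul_mem ha hb) (inv_mem ha), by simp [← hba, mul_assoc]⟩⟩

theorem Equiv.subLeft_mem_stabilizer_iff {A : Type*} [AddGroup A] (S : AddSubgroup A) (c : A) :
    Equiv.subLeft c ∈ MulAction.stabilizer (Equiv.Perm A) (S : Set A) ↔ c ∈ S := by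
  rw [MulAction.mem_stabilizer_iff]
  constructor
  · intro h
    have h0 : c - 0 ∈ Equiv.subLeft c • (S : Set A) :=
      Set.smul_mem_smul_set (a := Equiv.subLeft c) S.zero_mem
    rw [h] at h0
    simpa using h0
  · intro hc
    ext x
    simp only [← Set.image_smul, Equiv.Perm.smul_def, Equiv.subLeft_apply, Set.mem_image,
      SetLike.mem_coe]
    exact ⟨fun ⟨y, hy, hxy⟩ => hxy ▸ sub_mem hc hy,
      fun hx => ⟨-x + c, add_mem (neg_mem hx) hc, by simp [sub_eq_add_neg]⟩⟩

theorem Rat.half_notMem_range_intCast : (1 / 2 : ℚ) ∉ (Int.castAddHom ℚ).range := by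
  rintro ⟨n, hn⟩
  have h2n : (2 * n : ℚ) = 1 := by
    rw [show (n : ℚ) = 1 / 2 from hn]
    norm_num
  norm_cast at h2n
  omega

namespace grels

open PresentedGroup Subgroup

theorem inv_t_mul_a_mul_t_s14 : (of 2 : PresentedGroup grels)⁻¹ * of 0 * of 2 = of 1 :=
  mk_eq_mk_of_mul_inv_mem (Set.mem_insert _ _)

theorem inv_t_mul_b_mul_t_s14 :
    (of 2 : PresentedGroup grels)⁻¹ * of 1 * of 2 = of 0 * of 1 * (of 0)⁻¹ :=
  mk_eq_mk_of_mul_inv_mem (Set.mem_insert_of_mem _ rfl)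

def halveShift : Equiv.Perm ℚ where
  toFun x := 1 / 4 - x / 2
  invFun y := 1 / 2 - 2 * y
  left_inv x := by ring
  right_inv y := by ring

def affineGens : Fin 3 → Equiv.Perm ℚ := ![Equiv.subLeft 0, Equiv.subLeft 1, halveShift]

theorem affineGens_rels : ∀ r ∈ grels, FreeGroup.lift affineGens r = 1 := by
  rintro r (rfl | rfl) <;> ext x <;> simp [affineGens, halveShift, Equiv.Perm.inv_def] <;> ring

def affineRep : PresentedGroup grels →* Equiv.Perm ℚ := toGroup affineGens_rels

theorem affineRep_t_mul_a_mul_inv_t :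
    affineRep (of 2 * of 0 * (of 2)⁻¹) = Equiv.subLeft (1 / 2) := by
  ext x
  simp [affineRep, toGroup.of, affineGens, halveShift, Equiv.Perm.inv_def]
  ring

theorem closure_a_b_le_comap_stabilizer_int :
    closure {(of 0 : PresentedGroup grels), of 1} ≤
      (MulAction.stabilizer (Equiv.Perm ℚ) ((Int.castAddHom ℚ).range : Set ℚ)).comap affineRep := by
  have hint (n : ℤ) : Equiv.subLeft (n : ℚ) ∈
      MulAction.stabilizer (Equiv.Perm ℚ) ((Int.castAddHom ℚ).range : Set ℚ) :=
    (Equiv.subLeft_mem_stabilizer_iff _ _).2 ⟨n, rfl⟩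
  rw [closure_le, Set.insert_subset_iff, Set.singleton_subset_iff]
  exact ⟨by simpa [affineRep, toGroup.of, affineGens] using hint 0,
    by simpa [affineRep, toGroup.of, affineGens] using hint 1⟩

theorem t_mul_a_mul_inv_t_notMem_closure :
    of 2 * of 0 * (of 2)⁻¹ ∉ closure {(of 0 : PresentedGroup grels), of 1} := by
  intro h
  have hstab := closure_a_b_le_comap_stabilizer_int h
  rw [mem_comap, affineRep_t_mul_a_mul_inv_t, Equiv.subLeft_mem_stabilizer_iff] at hstab
  exact Rat.half_notMem_range_intCast hstab

end grels

open grels in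
theorem stmt_14 :
    Subgroup.closure {(PresentedGroup.of 0 : PresentedGroup grels), PresentedGroup.of 1} <
      Subgroup.map (MulAut.conj (PresentedGroup.of 2 : PresentedGroup grels)).toMonoidHom
        (Subgroup.closure {PresentedGroup.of 0, PresentedGroup.of 1}) :=
  SetLike.lt_iff_le_and_exists.2
    ⟨Subgroup.closure_pair_le_map_conj inv_t_mul_a_mul_t_s14 inv_t_mul_b_mul_t_s14, _,
      Subgroup.mem_map_of_mem _ (Subgroup.subset_closure (Set.mem_insert _ _)),
      t_mul_a_mul_inv_t_notMem_closure⟩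
end
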